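/- Let τ_1, …, τ_n be Hermitian unital linear functionals on ℂ⟨x_1⟩, …, ℂ⟨x_n⟩ respectively, let 1 ≤ n′ < n, and let h₁ be a self-adjoint element of ℂ⟨x_1, …, x_{n′}⟩ and h₂ a self-adjoint element of ℂ⟨x_{n′+1}, …, x_n⟩. Then π_{orb,R}(h₁ + h₂ : (τ_i)_{i=1}^n) ≤ π_{orb,R}(h₁ : (τ_i)_{i=1}^{n′}) + π_{orb,R}(h₂ : (τ_i)_{i=n′+1}^n), where the two right-hand pressures are the orbital free pressures of the sub-systems of variables x_1, …, x_{n′} and x_{n′+1}, …, x_n respectively, with the same cut-off R (conventions: (−∞) + a = −∞). -/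

import Mathlib

/-!
Orbital free pressure and its Legendre transform (Hiai–Ueda).

Common infrastructure: the free unital complex *-algebra on self-adjoint generators,
matrix microstate sets, the orbital free pressure, the orbital η-entropy, the orbital
free entropy; Lebesgue measure on self-adjoint matrices, the free pressure, free
entropy and η-entropy; Gibbs (micro-)ensembles.

The Haar probability measures `γ_{U(N)}` on the unitary groups are formalized as a
family of left-invariant Borel probability measures (which uniquely determines them).
-/

open MeasureTheory Filter Topology
open scoped BigOperators ENNReal TensorProduct ComplexOrder

noncomputable section

namespace OrbFP

/-- The algebra of `N × N` complex matrices. -/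
abbrev Mat (N : ℕ) := Matrix (Fin N) (Fin N) ℂ

/-- The normalized trace `tr_N`. -/
def trN (N : ℕ) (A : Mat N) : ℂ := A.trace / (N : ℂ)

/-- The (ℓ²-)operator norm of a matrix. -/
def opNorm {N : ℕ} (A : Mat N) : ℝ := ‖Matrix.toEuclideanCLM (𝕜 := ℂ) A‖

/-- The unitary group `U(N)`. -/
abbrev UN (N : ℕ) := Matrix.unitaryGroup (Fin N) ℂ

instance (N : ℕ) : MeasurableSpace (UN N) := borel _
instance (N : ℕ) : BorelSpace (UN N) := ⟨rfl⟩
instance (N : ℕ) : MeasurableSpace (Mat N) := borel _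
instance (N : ℕ) : BorelSpace (Mat N) := ⟨rfl⟩

/-- The free unital complex *-algebra on self-adjoint generators indexed by `X`. -/
abbrev FAlg (X : Type) := FreeAlgebra ℂ X

/-- Coefficient-wise complex conjugation on the free algebra. -/
def conjCoeff {X : Type} (p : FAlg X) : FAlg X :=
  (FreeAlgebra.equivMonoidAlgebraFreeMonoid (R := ℂ) (X := X)).symm
    (MonoidAlgebra.coeffEquiv.symm (Finsupp.mapRange (starRingEnd ℂ) (map_zero _)
      (MonoidAlgebra.coeffEquiv (FreeAlgebra.equivMonoidAlgebraFreeMonoid (R := ℂ) (X := X) p))))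

/-- The star operation of the free complex *-algebra with self-adjoint generators:
reverse words (the `star` of `FreeAlgebra`) and conjugate the coefficients. -/
def fstar {X : Type} (p : FAlg X) : FAlg X := star (conjCoeff p)

/-- Self-adjointness in the free complex *-algebra. -/
def IsSA {X : Type} (p : FAlg X) : Prop := fstar p = p

/-- A Hermitian unital linear functional. -/
def IsHermState {X : Type} (τ : FAlg X →ₗ[ℂ] ℂ) : Prop :=
  τ 1 = 1 ∧ ∀ p, τ (fstar p) = starRingEnd ℂ (τ p)

/-- Ordered product of a word of matrices. -/
def wordMat {N : ℕ} {κ : Type} (A : κ → Mat N) (w : List κ) : Mat N := (w.map A).prod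

/-- Ordered product of a word of generators in the free algebra. -/
def wordAlg {κ : Type} (w : List κ) : FAlg κ := (w.map (FreeAlgebra.ι ℂ)).prod

/-- The microstate set `Γ_R(τ; N, m, δ)` of a functional on the free algebra on `κ`:
tuples of self-adjoint matrices of operator norm at most `R` whose normalized trace of
every word of length `1 ≤ l ≤ m` is `δ`-close to the corresponding moment of `τ`. -/
def microSet {κ : Type} (R : ℝ) (τ : FAlg κ →ₗ[ℂ] ℂ) (N m : ℕ) (δ : ℝ) :
    Set (κ → Mat N) :=
  {A | (∀ j, (A j).IsHermitian ∧ opNorm (A j) ≤ R) ∧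
    ∀ w : List κ, w ≠ [] → w.length ≤ m →
      ‖trN N (wordMat A w) - τ (wordAlg w)‖ < δ}

/-- `τ` has finite-dimensional approximants. -/
def HasFDA {κ : Type} (R : ℝ) (τ : FAlg κ →ₗ[ℂ] ℂ) : Prop :=
  ∀ (m : ℕ) (δ : ℝ), 0 < δ → ∃ N, (microSet R τ N m δ).Nonempty

variable {ι : Type} [Fintype ι]

/-- The index of the generators `x_{ij}`, `i ∈ ι`, `1 ≤ j ≤ r i`. -/
abbrev gen (r : ι → ℕ) := Σ i : ι, Fin (r i)

/-- Evaluation of the full free algebra at a family of matrix tuples. -/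
def evalA {r : ι → ℕ} {N : ℕ} (A : ∀ i, Fin (r i) → Mat N) :
    FAlg (gen r) →ₐ[ℂ] Mat N :=
  FreeAlgebra.lift ℂ fun p : gen r => A p.1 p.2

/-- The canonical embedding `ℂ⟨x_i⟩ → ℂ⟨x⟩`. -/
def inclAlg (r : ι → ℕ) (i : ι) : FAlg (Fin (r i)) →ₐ[ℂ] FAlg (gen r) :=
  FreeAlgebra.lift ℂ fun j => FreeAlgebra.ι ℂ (⟨i, j⟩ : gen r)

/-- The restriction of a functional on `ℂ⟨x⟩` to `ℂ⟨x_i⟩`. -/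
def restr {r : ι → ℕ} (τ : FAlg (gen r) →ₗ[ℂ] ℂ) (i : ι) :
    FAlg (Fin (r i)) →ₗ[ℂ] ℂ :=
  τ ∘ₗ (inclAlg r i).toLinearMap

/-- The embedding of the free algebra of a sub-system of the variables. -/
def inclSub {r : ι → ℕ} (P : ι → Prop) :
    FAlg (gen fun i : Subtype P => r i.1) →ₐ[ℂ] FAlg (gen r) :=
  FreeAlgebra.lift ℂ fun p => FreeAlgebra.ι ℂ (⟨p.1.1, p.2⟩ : gen r)

/-- Restriction of a functional to a sub-system of the variables. -/
def restrSub {r : ι → ℕ} (P : ι → Prop) (τ : FAlg (gen r) →ₗ[ℂ] ℂ) :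
    FAlg (gen fun i : Subtype P => r i.1) →ₗ[ℂ] ℂ :=
  τ ∘ₗ (inclSub P).toLinearMap

/-- The conjugated family `(V_i A_i V_i^*)_i`. -/
def conjFam {r : ι → ℕ} {N : ℕ} (V : ι → UN N) (A : ∀ i, Fin (r i) → Mat N) :
    ∀ i, Fin (r i) → Mat N :=
  fun i j => (V i : Mat N) * A i j * star (V i : Mat N)

/-- The Gibbs weight `exp(-N² tr_N(h((V_i A_i V_i^*)_i)))`. -/
def gibbsWt {r : ι → ℕ} {N : ℕ} (h : FAlg (gen r)) (A : ∀ i, Fin (r i) → Mat N)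
    (V : ι → UN N) : ℝ :=
  Real.exp (-(N : ℝ) ^ 2 * (trN N (evalA (conjFam V A) h)).re)

/-- The product `∏_i Γ_R(τ_i; N, m, δ)` of the microstate sets. -/
def microProd (R : ℝ) {r : ι → ℕ} (τs : ∀ i, FAlg (Fin (r i)) →ₗ[ℂ] ℂ)
    (N m : ℕ) (δ : ℝ) : Set (∀ i, Fin (r i) → Mat N) :=
  {A | ∀ i, A i ∈ microSet R (τs i) N m δ}

/-- The finite-`N` orbital free pressure `π_{orb,R}(h : (τ_i); N, m, δ)`
(`-∞` when some microstate set is empty). -/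
def piOrbN (γ : ∀ N, Measure (UN N)) (R : ℝ) {r : ι → ℕ} (h : FAlg (gen r))
    (τs : ∀ i, FAlg (Fin (r i)) →ₗ[ℂ] ℂ) (N m : ℕ) (δ : ℝ) : EReal :=
  ⨆ A ∈ microProd R τs N m δ,
    ((Real.log (∫ V : ι → UN N, gibbsWt h A V ∂(Measure.pi fun _ => γ N)) : ℝ) : EReal)

/-- The orbital free pressure `π_{orb,R}(h : (τ_i))`. -/
def piOrb (γ : ∀ N, Measure (UN N)) (R : ℝ) {r : ι → ℕ} (h : FAlg (gen r))
    (τs : ∀ i, FAlg (Fin (r i)) →ₗ[ℂ] ℂ) : EReal :=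
  ⨅ (m : ℕ) (δ : ℝ) (_ : 0 < δ),
    Filter.limsup
      (fun N : ℕ => ((((N : ℝ) ^ 2)⁻¹ : ℝ) : EReal) * piOrbN γ R h τs N m δ)
      Filter.atTop

/-- The "universal" `R`-norm `‖h‖_R`: the supremum of the operator norms of all
evaluations of `h` at families of self-adjoint matrices of norm at most `R`. -/
def normR (R : ℝ) {r : ι → ℕ} (h : FAlg (gen r)) : ℝ :=
  sSup {t : ℝ | ∃ (N : ℕ) (A : ∀ i, Fin (r i) → Mat N),
    (∀ i j, (A i j).IsHermitian ∧ opNorm (A i j) ≤ R) ∧ t = opNorm (evalA A h)}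

/-- The minus Legendre transform `inf_h (φ(h) + π_{orb,R}(h : (τ_i)))` of the orbital
free pressure, relative to `(τ_i)`. -/
def etaOrbRel (γ : ∀ N, Measure (UN N)) (R : ℝ) {r : ι → ℕ}
    (τ : FAlg (gen r) →ₗ[ℂ] ℂ) (τs : ∀ i, FAlg (Fin (r i)) →ₗ[ℂ] ℂ) : EReal :=
  ⨅ (h : FAlg (gen r)) (_ : IsSA h),
    (((τ h).re : ℝ) : EReal) + piOrb γ R h τs

/-- The orbital `η`-entropy `η_{orb,R}(τ)`. -/
def etaOrb (γ : ∀ N, Measure (UN N)) (R : ℝ) {r : ι → ℕ}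
    (τ : FAlg (gen r) →ₗ[ℂ] ℂ) : EReal :=
  etaOrbRel γ R τ (restr τ)

/-- The microstate set `Γ_R(τ; N, m, δ)` of a functional on the full free algebra. -/
def microFull (R : ℝ) {r : ι → ℕ} (τ : FAlg (gen r) →ₗ[ℂ] ℂ) (N m : ℕ) (δ : ℝ) :
    Set (∀ i, Fin (r i) → Mat N) :=
  {A | (∀ i j, (A i j).IsHermitian ∧ opNorm (A i j) ≤ R) ∧
    ∀ w : List (gen r), w ≠ [] → w.length ≤ m →
      ‖trN N (wordMat (fun p : gen r => A p.1 p.2) w) - τ (wordAlg w)‖ < δ}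

/-- `τ` (on the full algebra) has finite-dimensional approximants. -/
def HasFDAFull (R : ℝ) {r : ι → ℕ} (τ : FAlg (gen r) →ₗ[ℂ] ℂ) : Prop :=
  ∀ (m : ℕ) (δ : ℝ), 0 < δ → ∃ N, (microFull R τ N m δ).Nonempty

/-- The orbital microstate set `Γ_orb(τ : (A_i); N, m, δ)`. -/
def orbSet (R : ℝ) {r : ι → ℕ} (τ : FAlg (gen r) →ₗ[ℂ] ℂ) {N : ℕ}
    (A : ∀ i, Fin (r i) → Mat N) (m : ℕ) (δ : ℝ) : Set (ι → UN N) :=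
  {V | conjFam V A ∈ microFull R τ N m δ}

/-- The orbital free entropy `χ_{orb,R}(τ)`. -/
def chiOrb (γ : ∀ N, Measure (UN N)) (R : ℝ) {r : ι → ℕ}
    (τ : FAlg (gen r) →ₗ[ℂ] ℂ) : EReal :=
  ⨅ (m : ℕ) (δ : ℝ) (_ : 0 < δ),
    Filter.limsup
      (fun N : ℕ => ((((N : ℝ) ^ 2)⁻¹ : ℝ) : EReal) *
        ⨆ A ∈ microProd R (restr τ) N m δ,
          ENNReal.log ((Measure.pi fun _ : ι => γ N) (orbSet R τ A m δ)))
      Filter.atTop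

/-- A tracial `R₀`-state on `ℂ⟨x⟩`. -/
def IsTracialRState {r : ι → ℕ} (R₀ : ℝ) (τ : FAlg (gen r) →ₗ[ℂ] ℂ) : Prop :=
  IsHermState τ ∧ (∀ p q, τ (p * q) = τ (q * p)) ∧
  (∀ p, 0 ≤ (τ (fstar p * p)).re) ∧
  ∀ (i : ι) (j : Fin (r i)) (k : ℕ) (p : FAlg (gen r)),
    (τ (fstar p * FreeAlgebra.ι ℂ (⟨i, j⟩ : gen r) ^ (2 * k) * p)).re
      ≤ R₀ ^ (2 * k) * (τ (fstar p * p)).re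

/-- `τ` is the free product of its restrictions `τ_i`: alternating words in the
`τ`-centered subalgebras `ℂ⟨x_i⟩` have vanishing `τ`-value. -/
def IsFreeProduct {r : ι → ℕ} (τ : FAlg (gen r) →ₗ[ℂ] ℂ) : Prop :=
  ∀ (k : ℕ), 0 < k → ∀ (idx : Fin k → ι) (p : ∀ l, FAlg (Fin (r (idx l)))),
    (∀ l, τ (inclAlg r (idx l) (p l)) = 0) →
    (∀ (l : Fin k) (hl : (l : ℕ) + 1 < k), idx l ≠ idx ⟨(l : ℕ) + 1, hl⟩) →
    τ ((List.ofFn fun l => inclAlg r (idx l) (p l)).prod) = 0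

/-- The partition function `Z_N^{(h, Ξ(N))}` of the orbital Gibbs micro-ensemble. -/
def ZOrbN (γ : ∀ N, Measure (UN N)) {r : ι → ℕ} (h : FAlg (gen r)) {N : ℕ}
    (A : ∀ i, Fin (r i) → Mat N) : ℝ :=
  ∫ V : ι → UN N, gibbsWt h A V ∂(Measure.pi fun _ => γ N)

/-- The orbital Gibbs micro-ensemble `μ_N^{(h, Ξ(N))}`. -/
def muOrbN (γ : ∀ N, Measure (UN N)) {r : ι → ℕ} (h : FAlg (gen r)) {N : ℕ}
    (A : ∀ i, Fin (r i) → Mat N) : Measure (ι → UN N) :=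
  (Measure.pi fun _ => γ N).withDensity
    fun V => ENNReal.ofReal (gibbsWt h A V / ZOrbN γ h A)

/-! ### Lebesgue measure on self-adjoint matrices and one-variable quantities -/

/-- The parametrization of self-adjoint matrices by the diagonal entries and the real
and imaginary parts of the above-diagonal entries. -/
def matOfCoord (N : ℕ) (f : Fin N × Fin N → ℝ) : Mat N :=
  Matrix.of fun p q =>
    if p = q then (f (p, p) : ℂ)
    else if p < q then (f (p, q) : ℂ) + (f (q, p) : ℂ) * Complex.I
    else (f (q, p) : ℂ) - (f (p, q) : ℂ) * Complex.I

/-- The Lebesgue measure `Λ_N` on self-adjoint `N × N` matrices. -/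
def LambdaMat (N : ℕ) : Measure (Mat N) :=
  Measure.map (matOfCoord N) (volume : Measure (Fin N × Fin N → ℝ))

/-- The product Lebesgue measure `Λ_N^{⊗n}` on `n`-tuples of self-adjoint matrices. -/
def LambdaPow (n N : ℕ) : Measure (Fin n → Mat N) :=
  Measure.map (fun f i => matOfCoord N (f i))
    (volume : Measure (Fin n → Fin N × Fin N → ℝ))

/-- Evaluation of a polynomial in `n` single variables at an `n`-tuple of matrices. -/
def evalSingle {n : ℕ} {N : ℕ} (A : Fin n → Mat N) :
    FAlg (gen fun _ : Fin n => 1) →ₐ[ℂ] Mat N :=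
  evalA fun i (_ : Fin 1) => A i

/-- The set `((M_N(ℂ)^{sa})_R)^n`. -/
def ballR (n N : ℕ) (R : ℝ) : Set (Fin n → Mat N) :=
  {A | ∀ i, (A i).IsHermitian ∧ opNorm (A i) ≤ R}

/-- The partition function `Z_{R,N}^h`. -/
def ZR (n N : ℕ) (R : ℝ) (h : FAlg (gen fun _ : Fin n => 1)) : ℝ :=
  ∫ A in ballR n N R,
    Real.exp (-(N : ℝ) ^ 2 * (trN N (evalSingle A h)).re) ∂(LambdaPow n N)

/-- The free pressure `π_R(h)`. -/
def piR (n : ℕ) (R : ℝ) (h : FAlg (gen fun _ : Fin n => 1)) : EReal :=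
  Filter.limsup
    (fun N : ℕ => ((((N : ℝ) ^ 2)⁻¹ : ℝ) : EReal) * ((Real.log (ZR n N R h) : ℝ) : EReal)
      + ((((n : ℝ) / 2 * Real.log N) : ℝ) : EReal))
    Filter.atTop

/-- The Gibbs micro-ensemble `λ_{R,N}^h`. -/
def lambdaGibbs (n N : ℕ) (R : ℝ) (h : FAlg (gen fun _ : Fin n => 1)) :
    Measure (Fin n → Mat N) :=
  ((LambdaPow n N).restrict (ballR n N R)).withDensity
    fun A => ENNReal.ofReal
      (Real.exp (-(N : ℝ) ^ 2 * (trN N (evalSingle A h)).re) / ZR n N R h)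

/-- The microstate free entropy `χ_R` of a single-variable functional. -/
def chiR1 (R : ℝ) (τ : FAlg (Fin 1) →ₗ[ℂ] ℂ) : EReal :=
  ⨅ (m : ℕ) (δ : ℝ) (_ : 0 < δ),
    Filter.limsup
      (fun N : ℕ => ((((N : ℝ) ^ 2)⁻¹ : ℝ) : EReal) *
          ENNReal.log (LambdaMat N {B : Mat N | (fun _ : Fin 1 => B) ∈ microSet R τ N m δ})
        + ((((1 : ℝ) / 2 * Real.log N) : ℝ) : EReal))
      Filter.atTop

/-- The microstate free entropy `χ_R` of a functional on `n` single variables. -/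
def chiRn (n : ℕ) (R : ℝ) (σ : FAlg (gen fun _ : Fin n => 1) →ₗ[ℂ] ℂ) : EReal :=
  ⨅ (m : ℕ) (δ : ℝ) (_ : 0 < δ),
    Filter.limsup
      (fun N : ℕ => ((((N : ℝ) ^ 2)⁻¹ : ℝ) : EReal) *
          ENNReal.log (LambdaPow n N
            {A : Fin n → Mat N | (fun i (_ : Fin 1) => A i) ∈ microFull R σ N m δ})
        + ((((n : ℝ) / 2 * Real.log N) : ℝ) : EReal))
      Filter.atTop

/-- The `η`-entropy `η_R(τ)`, the minus Legendre transform of the free pressure. -/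
def etaR (n : ℕ) (R : ℝ) (τ : FAlg (gen fun _ : Fin n => 1) →ₗ[ℂ] ℂ) : EReal :=
  ⨅ (h : FAlg (gen fun _ : Fin n => 1)) (_ : IsSA h),
    (((τ h).re : ℝ) : EReal) + piR n R h

/-! ### The doubled (tensor) orbital free pressure -/

/-- The algebraic tensor product `ℂ⟨x⟩ ⊗ ℂ⟨x⟩`. -/
abbrev TAlg (r : ι → ℕ) := TensorProduct ℂ (FAlg (gen r)) (FAlg (gen r))

/-- The functional `τ ⊗ τ` on `ℂ⟨x⟩ ⊗ ℂ⟨x⟩`. -/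
def tensFun {r : ι → ℕ} (τ : FAlg (gen r) →ₗ[ℂ] ℂ) : TAlg r →ₗ[ℂ] ℂ :=
  (TensorProduct.lid ℂ ℂ).toLinearMap ∘ₗ TensorProduct.map τ τ

/-- The normalized trace as a linear map. -/
def trLin (N : ℕ) : Mat N →ₗ[ℂ] ℂ := (N : ℂ)⁻¹ • Matrix.traceLinearMap (Fin N) ℂ ℂ

/-- The functional `tr_N ⊗ tr_N` on `M_N(ℂ) ⊗ M_N(ℂ)`. -/
def tr2 (N : ℕ) : TensorProduct ℂ (Mat N) (Mat N) →ₗ[ℂ] ℂ :=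
  (TensorProduct.lid ℂ ℂ).toLinearMap ∘ₗ TensorProduct.map (trLin N) (trLin N)

/-- Evaluation of `ℂ⟨x⟩ ⊗ ℂ⟨x⟩` at a family of matrix tuples. -/
def evalT {r : ι → ℕ} {N : ℕ} (A : ∀ i, Fin (r i) → Mat N) :
    TAlg r →ₐ[ℂ] TensorProduct ℂ (Mat N) (Mat N) :=
  Algebra.TensorProduct.map (evalA A) (evalA A)

/-- The finite-`N` doubled orbital free pressure `π^{(2)}_{orb,R}(p : (τ_i); N, m, δ)`. -/
def pi2OrbN (γ : ∀ N, Measure (UN N)) (R : ℝ) {r : ι → ℕ} (p : TAlg r)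
    (τs : ∀ i, FAlg (Fin (r i)) →ₗ[ℂ] ℂ) (N m : ℕ) (δ : ℝ) : EReal :=
  ⨆ A ∈ microProd R τs N m δ,
    ((Real.log (∫ V : ι → UN N,
        Real.exp (-(N : ℝ) ^ 2 * (tr2 N (evalT (conjFam V A) p)).re)
        ∂(Measure.pi fun _ => γ N)) : ℝ) : EReal)

/-- The doubled orbital free pressure `π^{(2)}_{orb,R}(p : (τ_i))`. -/
def pi2Orb (γ : ∀ N, Measure (UN N)) (R : ℝ) {r : ι → ℕ} (p : TAlg r)
    (τs : ∀ i, FAlg (Fin (r i)) →ₗ[ℂ] ℂ) : EReal :=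
  ⨅ (m : ℕ) (δ : ℝ) (_ : 0 < δ),
    Filter.limsup
      (fun N : ℕ => ((((N : ℝ) ^ 2)⁻¹ : ℝ) : EReal) * pi2OrbN γ R p τs N m δ)
      Filter.atTop

/-!
For fixed microstates `A`, the Gibbs weight of `h₁ + h₂` at `V` is the product of a function of
the unitaries of the first sub-system and a function of those of the second, so by Fubini for
the product measure the partition function factors and the finite-`N` pressures are
subadditive. Each of them is bounded above by `N² C` with `C` a uniform bound of `‖h(A)‖`
over `‖A_{ij}‖ ≤ R`, so no pressure is `⊤`; subadditivity then survives the `limsup` and,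
refining two parameter pairs `(m₁, δ₁)`, `(m₂, δ₂)` to `(max m₁ m₂, min δ₁ δ₂)`, the infimum
over `(m, δ)`.
-/

instance (N : ℕ) : SecondCountableTopology (Mat N) :=
  inferInstanceAs (SecondCountableTopology (Fin N → Fin N → ℂ))

instance (N : ℕ) : SecondCountableTopology (UN N) :=
  TopologicalSpace.Subtype.secondCountableTopology _

lemma integral_pi_mul_of_compl {α : Type*} [MeasurableSpace α] (μ : Measure α) [SigmaFinite μ]
    {P Q : ι → Prop} [DecidablePred P] [DecidablePred Q] (hPQ : ∀ i, ¬ P i ↔ Q i)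
    (f : (Subtype P → α) → ℝ) (g : (Subtype Q → α) → ℝ) :
    ∫ x : ι → α, f (fun i => x i.1) * g (fun i => x i.1) ∂(Measure.pi fun _ => μ) =
      (∫ y, f y ∂(Measure.pi fun _ => μ)) * ∫ z, g z ∂(Measure.pi fun _ => μ) := by
  let e : {i // ¬ P i} ≃ Subtype Q := Equiv.subtypeEquivRight hPQ
  have hg : ∫ z, g z ∂(Measure.pi fun _ => μ) =
      ∫ w : {i // ¬ P i} → α, g (fun i => w (e.symm i)) ∂(Measure.pi fun _ => μ) :=
    ((measurePreserving_piCongrLeft (fun _ : Subtype Q => μ) e).integral_comp' g).symm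
  rw [hg, ← integral_prod_mul,
    ← (measurePreserving_piEquivPiSubtypeProd (fun _ : ι => μ) P).integral_comp']
  rfl

lemma trN_add {N : ℕ} (A B : Mat N) : trN N (A + B) = trN N A + trN N B := by
  simp only [trN, Matrix.trace_add, add_div]

section OperatorNorm

open scoped Matrix.Norms.L2Operator

variable {N : ℕ}

lemma opNorm_eq_norm (A : Mat N) : opNorm A = ‖A‖ := rfl

lemma opNorm_mul_le (A B : Mat N) : opNorm (A * B) ≤ opNorm A * opNorm B := norm_mul_le A B

lemma opNorm_add_le (A B : Mat N) : opNorm (A + B) ≤ opNorm A + opNorm B := norm_add_le A B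

lemma opNorm_algebraMap_le (c : ℂ) : opNorm (algebraMap ℂ (Mat N) c) ≤ ‖c‖ := by
  rw [opNorm_eq_norm, norm_algebraMap, Matrix.cstar_norm_def, map_one]
  exact mul_le_of_le_one_right (norm_nonneg c) ContinuousLinearMap.norm_id_le

lemma opNorm_unitary_conj (U : UN N) (A : Mat N) :
    opNorm ((U : Mat N) * A * star (U : Mat N)) = opNorm A := by
  rw [opNorm_eq_norm, CStarRing.norm_mul_mem_unitary _ (Unitary.star_mem U.2),
    CStarRing.norm_mem_unitary_mul _ U.2, opNorm_eq_norm]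

lemma norm_apply_self_le_opNorm (A : Mat N) (i : Fin N) : ‖A i i‖ ≤ opNorm A := by
  classical
  have h := A.l2_opNorm_mulVec (EuclideanSpace.single i (1 : ℂ))
  rw [EuclideanSpace.single, PiLp.norm_single, norm_one, mul_one] at h
  refine le_trans (le_of_eq_of_le ?_ (PiLp.norm_apply_le _ i)) h
  simp [Matrix.mulVec_single]

lemma norm_trN_le_opNorm (A : Mat N) : ‖trN N A‖ ≤ opNorm A := by
  rcases N.eq_zero_or_pos with rfl | hN
  · simp [trN, opNorm_eq_norm]
  have hN' : (0 : ℝ) < N := Nat.cast_pos.2 hN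
  rw [trN, norm_div, Complex.norm_natCast, div_le_iff₀ hN']
  calc ‖A.trace‖ ≤ ∑ i, ‖A i i‖ := norm_sum_le _ _
    _ ≤ ∑ _i : Fin N, opNorm A := Finset.sum_le_sum fun i _ => norm_apply_self_le_opNorm A i
    _ = opNorm A * N := by simp [mul_comm]

end OperatorNorm

section Evaluation

variable {κ : Type} {r : κ → ℕ} {N : ℕ}

lemma exists_opNorm_evalA_le (R : ℝ) (h : FAlg (gen r)) :
    ∃ C, 0 ≤ C ∧ ∀ (N : ℕ) (A : ∀ i, Fin (r i) → Mat N),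
      (∀ i j, opNorm (A i j) ≤ R) → opNorm (evalA A h) ≤ C := by
  induction h using FreeAlgebra.induction with
  | grade0 c =>
    exact ⟨‖c‖, norm_nonneg c, fun N A _ => by
      simpa only [AlgHom.commutes] using opNorm_algebraMap_le c⟩
  | grade1 x =>
    exact ⟨max R 0, le_max_right R 0, fun N A hA => by
      simpa [evalA] using (hA x.1 x.2).trans (le_max_left R 0)⟩
  | mul a b ha hb =>
    obtain ⟨C₁, hC₁, ha⟩ := ha
    obtain ⟨C₂, hC₂, hb⟩ := hb
    refine ⟨C₁ * C₂, mul_nonneg hC₁ hC₂, fun N A hA => ?_⟩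
    rw [map_mul]
    exact (opNorm_mul_le _ _).trans
      (mul_le_mul (ha N A hA) (hb N A hA) (norm_nonneg _) hC₁)
  | add a b ha hb =>
    obtain ⟨C₁, hC₁, ha⟩ := ha
    obtain ⟨C₂, hC₂, hb⟩ := hb
    refine ⟨C₁ + C₂, add_nonneg hC₁ hC₂, fun N A hA => ?_⟩
    rw [map_add]
    exact (opNorm_add_le _ _).trans (add_le_add (ha N A hA) (hb N A hA))

lemma evalA_inclSub (P : κ → Prop) (A : ∀ i, Fin (r i) → Mat N)
    (q : FAlg (gen fun i : Subtype P => r i.1)) :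
    evalA A (inclSub P q) = evalA (fun i : Subtype P => A i.1) q := by
  have : (evalA A).comp (inclSub P) = evalA fun i : Subtype P => A i.1 :=
    FreeAlgebra.hom_ext (funext fun p => by simp [inclSub, evalA])
  exact DFunLike.congr_fun this q

lemma evalA_conjFam_inclSub (P : κ → Prop) (V : κ → UN N)
    (A : ∀ i, Fin (r i) → Mat N) (q : FAlg (gen fun i : Subtype P => r i.1)) :
    evalA (conjFam V A) (inclSub P q) =
      evalA (conjFam (fun i : Subtype P => V i.1) fun i => A i.1) q :=
  evalA_inclSub P _ q

lemma continuous_evalA_conjFam (A : ∀ i, Fin (r i) → Mat N) (h : FAlg (gen r)) :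
    Continuous fun V : κ → UN N => evalA (conjFam V A) h := by
  induction h using FreeAlgebra.induction with
  | grade0 c =>
    simp only [AlgHom.commutes]
    exact continuous_const
  | grade1 x =>
    have hV : Continuous fun V : κ → UN N => (V x.1 : Mat N) :=
      continuous_subtype_val.comp (continuous_apply x.1)
    simpa [evalA, conjFam, Matrix.star_eq_conjTranspose] using
      (hV.matrix_mul continuous_const).matrix_mul hV.matrix_conjTranspose
  | mul a b ha hb =>
    simp only [map_mul]
    exact ha.matrix_mul hb
  | add a b ha hb =>
    simp only [map_add]
    exact ha.add hb

end Evaluation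

section GibbsWeight

variable {κ : Type} {r : κ → ℕ} {N : ℕ} (h : FAlg (gen r)) (A : ∀ i, Fin (r i) → Mat N)

lemma gibbsWt_pos (V : κ → UN N) : 0 < gibbsWt h A V := Real.exp_pos _

lemma continuous_gibbsWt : Continuous (gibbsWt h A) := by
  have := continuous_evalA_conjFam A h
  unfold gibbsWt trN
  fun_prop

lemma gibbsWt_inclSub_add {P Q : κ → Prop} (h₁ : FAlg (gen fun i : Subtype P => r i.1))
    (h₂ : FAlg (gen fun i : Subtype Q => r i.1)) (V : κ → UN N) :
    gibbsWt (inclSub P h₁ + inclSub Q h₂) A V =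
      gibbsWt h₁ (fun i : Subtype P => A i.1) (fun i => V i.1) *
        gibbsWt h₂ (fun i : Subtype Q => A i.1) (fun i => V i.1) := by
  simp only [gibbsWt, map_add, evalA_conjFam_inclSub, trN_add, Complex.add_re, mul_add,
    Real.exp_add]

lemma opNorm_evalA_conjFam_le {R C : ℝ}
    (hb : ∀ (N : ℕ) (B : ∀ i, Fin (r i) → Mat N),
      (∀ i j, opNorm (B i j) ≤ R) → opNorm (evalA B h) ≤ C)
    (hA : ∀ i j, opNorm (A i j) ≤ R) (V : κ → UN N) :
    opNorm (evalA (conjFam V A) h) ≤ C :=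
  hb N _ fun i j => (opNorm_unitary_conj (V i) (A i j)).trans_le (hA i j)

variable {C : ℝ} (hC : ∀ V, opNorm (evalA (conjFam V A) h) ≤ C)
include hC

lemma gibbsWt_le_exp (V : κ → UN N) : gibbsWt h A V ≤ Real.exp ((N : ℝ) ^ 2 * C) := by
  have hre : -C ≤ (trN N (evalA (conjFam V A) h)).re := neg_le_of_abs_le <|
    (Complex.abs_re_le_norm _).trans ((norm_trN_le_opNorm _).trans (hC V))
  refine Real.exp_le_exp.2 ?_
  rw [neg_mul, ← mul_neg]
  exact mul_le_mul_of_nonneg_left (by linarith) (sq_nonneg _)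

variable [Fintype κ] (μ : Measure (κ → UN N))

lemma integrable_gibbsWt [IsFiniteMeasure μ] : Integrable (gibbsWt h A) μ :=
  .of_bound (continuous_gibbsWt h A).aestronglyMeasurable _ <| ae_of_all _ fun V => by
    rw [Real.norm_of_nonneg (gibbsWt_pos h A V).le]
    exact gibbsWt_le_exp h A hC V

lemma integral_gibbsWt_pos [IsFiniteMeasure μ] [NeZero μ] : 0 < ∫ V, gibbsWt h A V ∂μ :=
  integral_exp_pos (integrable_gibbsWt h A hC μ)

lemma log_integral_gibbsWt_le [IsProbabilityMeasure μ] :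
    Real.log (∫ V, gibbsWt h A V ∂μ) ≤ (N : ℝ) ^ 2 * C := by
  rw [Real.log_le_iff_le_exp (integral_gibbsWt_pos h A hC μ)]
  calc ∫ V, gibbsWt h A V ∂μ ≤ ∫ _V, Real.exp ((N : ℝ) ^ 2 * C) ∂μ :=
        integral_mono (integrable_gibbsWt h A hC μ) (integrable_const _) (gibbsWt_le_exp h A hC)
    _ = Real.exp ((N : ℝ) ^ 2 * C) := by simp

end GibbsWeight

lemma microSet_anti {κ : Type} (R : ℝ) (τ : FAlg κ →ₗ[ℂ] ℂ) (N : ℕ) {m m' : ℕ} {δ δ' : ℝ}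
    (hm : m ≤ m') (hδ : δ' ≤ δ) : microSet R τ N m' δ' ⊆ microSet R τ N m δ :=
  fun _ hA => ⟨hA.1, fun w hw hl => (hA.2 w hw (hl.trans hm)).trans_le hδ⟩

lemma piOrbN_anti (γ : ∀ N, Measure (UN N)) {r : ι → ℕ} (R : ℝ) (h : FAlg (gen r))
    (τs : ∀ i, FAlg (Fin (r i)) →ₗ[ℂ] ℂ) (N : ℕ) {m m' : ℕ} {δ δ' : ℝ} (hm : m ≤ m')
    (hδ : δ' ≤ δ) : piOrbN γ R h τs N m' δ' ≤ piOrbN γ R h τs N m δ :=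
  biSup_mono fun _ hA i => microSet_anti R (τs i) N hm hδ (hA i)

section Pressure

variable (γ : ∀ N, Measure (UN N)) [∀ N, IsProbabilityMeasure (γ N)] {r : ι → ℕ}

lemma piOrbN_le_of_opNorm_evalA_le {R C : ℝ} {h : FAlg (gen r)}
    (hb : ∀ (N : ℕ) (B : ∀ i, Fin (r i) → Mat N),
      (∀ i j, opNorm (B i j) ≤ R) → opNorm (evalA B h) ≤ C)
    (τs : ∀ i, FAlg (Fin (r i)) →ₗ[ℂ] ℂ) (N m : ℕ) (δ : ℝ) :
    piOrbN γ R h τs N m δ ≤ (((N : ℝ) ^ 2 * C : ℝ) : EReal) :=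
  iSup₂_le fun A hA => EReal.coe_le_coe_iff.2 <| log_integral_gibbsWt_le h A
    (opNorm_evalA_conjFam_le h A hb fun i j => ((hA i).1 j).2) _

lemma piOrbN_inclSub_add_le {P Q : ι → Prop} [DecidablePred P] [DecidablePred Q]
    (hPQ : ∀ i, ¬ P i ↔ Q i) (R : ℝ) (h₁ : FAlg (gen fun i : Subtype P => r i.1))
    (h₂ : FAlg (gen fun i : Subtype Q => r i.1)) (τs : ∀ i, FAlg (Fin (r i)) →ₗ[ℂ] ℂ)
    (N m : ℕ) (δ : ℝ) :
    piOrbN γ R (inclSub P h₁ + inclSub Q h₂) τs N m δ ≤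
      piOrbN γ R h₁ (fun i : Subtype P => τs i.1) N m δ +
        piOrbN γ R h₂ (fun i : Subtype Q => τs i.1) N m δ := by
  refine iSup₂_le fun A hA => ?_
  obtain ⟨C₁, -, hb₁⟩ := exists_opNorm_evalA_le R h₁
  obtain ⟨C₂, -, hb₂⟩ := exists_opNorm_evalA_le R h₂
  have hA' : ∀ i j, opNorm (A i j) ≤ R := fun i j => ((hA i).1 j).2
  have hpos₁ := integral_gibbsWt_pos h₁ _
    (opNorm_evalA_conjFam_le h₁ _ hb₁ fun i j => hA' i.1 j) (Measure.pi fun _ => γ N)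
  have hpos₂ := integral_gibbsWt_pos h₂ _
    (opNorm_evalA_conjFam_le h₂ _ hb₂ fun i j => hA' i.1 j) (Measure.pi fun _ => γ N)
  simp only [gibbsWt_inclSub_add]
  rw [integral_pi_mul_of_compl (γ N) hPQ, Real.log_mul hpos₁.ne' hpos₂.ne', EReal.coe_add]
  exact add_le_add (le_iSup₂_of_le _ (fun i => hA i.1) le_rfl)
    (le_iSup₂_of_le _ (fun i => hA i.1) le_rfl)

end Pressure

def piOrbSeq (γ : ∀ N, Measure (UN N)) (R : ℝ) {r : ι → ℕ} (h : FAlg (gen r))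
    (τs : ∀ i, FAlg (Fin (r i)) →ₗ[ℂ] ℂ) (m : ℕ) (δ : ℝ) (N : ℕ) : EReal :=
  ((((N : ℝ) ^ 2)⁻¹ : ℝ) : EReal) * piOrbN γ R h τs N m δ

section NormalizedPressure

variable (γ : ∀ N, Measure (UN N)) {r : ι → ℕ}

lemma piOrb_le_limsup_piOrbSeq (R : ℝ) (h : FAlg (gen r))
    (τs : ∀ i, FAlg (Fin (r i)) →ₗ[ℂ] ℂ) (m : ℕ) {δ : ℝ} (hδ : 0 < δ) :
    piOrb γ R h τs ≤ limsup (piOrbSeq γ R h τs m δ) atTop :=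
  iInf_le_of_le m (iInf_le_of_le δ (iInf_le _ hδ))

lemma exists_limsup_piOrbSeq_lt {R : ℝ} {h : FAlg (gen r)}
    {τs : ∀ i, FAlg (Fin (r i)) →ₗ[ℂ] ℂ} {a : EReal} (ha : piOrb γ R h τs < a) :
    ∃ m δ, 0 < δ ∧ limsup (piOrbSeq γ R h τs m δ) atTop < a := by
  simp only [piOrb, iInf_lt_iff, exists_prop] at ha
  exact ha

lemma piOrbSeq_anti (R : ℝ) (h : FAlg (gen r)) (τs : ∀ i, FAlg (Fin (r i)) →ₗ[ℂ] ℂ)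
    {m m' : ℕ} {δ δ' : ℝ} (hm : m ≤ m') (hδ : δ' ≤ δ) (N : ℕ) :
    piOrbSeq γ R h τs m' δ' N ≤ piOrbSeq γ R h τs m δ N :=
  mul_le_mul_of_nonneg_left (piOrbN_anti γ R h τs N hm hδ) (EReal.coe_nonneg.2 (by positivity))

variable [∀ N, IsProbabilityMeasure (γ N)]

lemma limsup_piOrbSeq_ne_top (R : ℝ) (h : FAlg (gen r)) (τs : ∀ i, FAlg (Fin (r i)) →ₗ[ℂ] ℂ)
    (m : ℕ) (δ : ℝ) : limsup (piOrbSeq γ R h τs m δ) atTop ≠ ⊤ := by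
  obtain ⟨C, hC, hb⟩ := exists_opNorm_evalA_le R h
  have hseq (N : ℕ) : piOrbSeq γ R h τs m δ N ≤ C := by
    refine (mul_le_mul_of_nonneg_left (piOrbN_le_of_opNorm_evalA_le γ hb τs N m δ)
      (EReal.coe_nonneg.2 (by positivity))).trans ?_
    rw [← EReal.coe_mul, EReal.coe_le_coe_iff, ← mul_assoc]
    exact mul_le_of_le_one_left hC (inv_mul_le_one_of_le₀ le_rfl (by positivity))
  exact ne_top_of_le_ne_top (EReal.coe_ne_top C)
    (limsup_le_of_le (by isBoundedDefault) (Eventually.of_forall hseq))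

lemma piOrb_ne_top (R : ℝ) (h : FAlg (gen r)) (τs : ∀ i, FAlg (Fin (r i)) →ₗ[ℂ] ℂ) :
    piOrb γ R h τs ≠ ⊤ :=
  ne_top_of_le_ne_top (limsup_piOrbSeq_ne_top γ R h τs 0 1)
    (piOrb_le_limsup_piOrbSeq γ R h τs 0 one_pos)

variable {P Q : ι → Prop} [DecidablePred P] [DecidablePred Q] (hPQ : ∀ i, ¬ P i ↔ Q i)
  (R : ℝ) (h₁ : FAlg (gen fun i : Subtype P => r i.1))
  (h₂ : FAlg (gen fun i : Subtype Q => r i.1)) (τs : ∀ i, FAlg (Fin (r i)) →ₗ[ℂ] ℂ)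
include hPQ

lemma piOrbSeq_inclSub_add_le (m : ℕ) (δ : ℝ) (N : ℕ) :
    piOrbSeq γ R (inclSub P h₁ + inclSub Q h₂) τs m δ N ≤
      piOrbSeq γ R h₁ (fun i : Subtype P => τs i.1) m δ N +
        piOrbSeq γ R h₂ (fun i : Subtype Q => τs i.1) m δ N :=
  (mul_le_mul_of_nonneg_left (piOrbN_inclSub_add_le γ hPQ R h₁ h₂ τs N m δ)
    (EReal.coe_nonneg.2 (by positivity))).trans_eq <|
      EReal.left_distrib_of_nonneg_of_ne_top (EReal.coe_nonneg.2 (by positivity))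
        (EReal.coe_ne_top _) _ _

lemma piOrb_inclSub_add_le_limsup_add {m₁ m₂ : ℕ} {δ₁ δ₂ : ℝ} (hδ₁ : 0 < δ₁) (hδ₂ : 0 < δ₂) :
    piOrb γ R (inclSub P h₁ + inclSub Q h₂) τs ≤
      limsup (piOrbSeq γ R h₁ (fun i : Subtype P => τs i.1) m₁ δ₁) atTop +
        limsup (piOrbSeq γ R h₂ (fun i : Subtype Q => τs i.1) m₂ δ₂) atTop :=
  calc piOrb γ R (inclSub P h₁ + inclSub Q h₂) τs
      ≤ limsup (piOrbSeq γ R (inclSub P h₁ + inclSub Q h₂) τs (max m₁ m₂) (min δ₁ δ₂)) atTop :=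
        piOrb_le_limsup_piOrbSeq γ R _ τs _ (lt_min hδ₁ hδ₂)
    _ ≤ limsup (piOrbSeq γ R h₁ (fun i : Subtype P => τs i.1) m₁ δ₁ +
          piOrbSeq γ R h₂ (fun i : Subtype Q => τs i.1) m₂ δ₂) atTop :=
        limsup_le_limsup (Eventually.of_forall fun N =>
          (piOrbSeq_inclSub_add_le γ hPQ R h₁ h₂ τs _ _ N).trans <| add_le_add
            (piOrbSeq_anti γ R h₁ _ (le_max_left m₁ m₂) (min_le_left δ₁ δ₂) N)
            (piOrbSeq_anti γ R h₂ _ (le_max_right m₁ m₂) (min_le_right δ₁ δ₂) N))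
    _ ≤ _ := EReal.limsup_add_le (Or.inr (limsup_piOrbSeq_ne_top γ R h₂ _ m₂ δ₂))
        (Or.inl (limsup_piOrbSeq_ne_top γ R h₁ _ m₁ δ₁))

lemma piOrb_inclSub_add_le :
    piOrb γ R (inclSub P h₁ + inclSub Q h₂) τs ≤
      piOrb γ R h₁ (fun i : Subtype P => τs i.1) + piOrb γ R h₂ (fun i : Subtype Q => τs i.1) :=
  EReal.le_add_of_forall_gt (Or.inr (piOrb_ne_top γ R h₂ _)) (Or.inl (piOrb_ne_top γ R h₁ _))
    fun a ha b hb => by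
      obtain ⟨m₁, δ₁, hδ₁, ha⟩ := exists_limsup_piOrbSeq_lt γ ha
      obtain ⟨m₂, δ₂, hδ₂, hb⟩ := exists_limsup_piOrbSeq_lt γ hb
      exact (piOrb_inclSub_add_le_limsup_add γ hPQ R h₁ h₂ τs hδ₁ hδ₂).trans
        (add_le_add ha.le hb.le)

end NormalizedPressure

theorem statement4_general {n : ℕ} (r : Fin n → ℕ) (R : ℝ)
    (γ : ∀ N, Measure (UN N)) [∀ N, IsProbabilityMeasure (γ N)]
    (τs : ∀ i, FAlg (Fin (r i)) →ₗ[ℂ] ℂ)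
    (n' : ℕ)
    (h₁ : FAlg (gen fun i : {i : Fin n // (i : ℕ) < n'} => r i.1))
    (h₂ : FAlg (gen fun i : {i : Fin n // n' ≤ (i : ℕ)} => r i.1)) :
    piOrb γ R (inclSub (fun i : Fin n => (i : ℕ) < n') h₁ +
        inclSub (fun i : Fin n => n' ≤ (i : ℕ)) h₂) τs ≤
      piOrb γ R h₁ (fun i : {i : Fin n // (i : ℕ) < n'} => τs i.1) +
        piOrb γ R h₂ (fun i : {i : Fin n // n' ≤ (i : ℕ)} => τs i.1) :=
  piOrb_inclSub_add_le γ (fun _ => not_lt) R h₁ h₂ τs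

/-- Proposition 2.2 (5): subadditivity of the orbital free pressure
with respect to splitting the variables into two sub-systems. -/
theorem statement4 {n : ℕ} (hn : 1 ≤ n) (r : Fin n → ℕ) (hr : ∀ i, 1 ≤ r i) (R : ℝ) (hR : 0 < R)
    (γ : ∀ N, Measure (UN N)) [∀ N, IsProbabilityMeasure (γ N)]
    (hγ : ∀ N, (γ N).IsMulLeftInvariant)
    (τs : ∀ i, FAlg (Fin (r i)) →ₗ[ℂ] ℂ) (hτs : ∀ i, IsHermState (τs i))
    (n' : ℕ) (hn'1 : 1 ≤ n') (hn' : n' < n)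
    (h₁ : FAlg (gen fun i : {i : Fin n // (i : ℕ) < n'} => r i.1))
    (h₂ : FAlg (gen fun i : {i : Fin n // n' ≤ (i : ℕ)} => r i.1))
    (hh₁ : IsSA h₁) (hh₂ : IsSA h₂) :
    piOrb γ R (inclSub (fun i : Fin n => (i : ℕ) < n') h₁ +
        inclSub (fun i : Fin n => n' ≤ (i : ℕ)) h₂) τs ≤
      piOrb γ R h₁ (fun i : {i : Fin n // (i : ℕ) < n'} => τs i.1) +
        piOrb γ R h₂ (fun i : {i : Fin n // n' ≤ (i : ℕ)} => τs i.1) :=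
  statement4_general r R γ τs n' h₁ h₂

end OrbFP

end
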